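/- For every connected simple graph G with n vertices and m edges, mc(G) ≤ m − n + χ(G), where χ(G) is the vertex chromatic number of G. -/

import Mathlib

open SimpleGraph Filter Real

/-- An edge-coloring `c` (colors on vertex pairs, only the values on edges matter)
of `G` is a monochromatic connection coloring (MC-coloring) if every two vertices
are joined by a path all of whose edges receive the same color. -/
def IsMCColoring {V : Type*} (G : SimpleGraph V) (c : Sym2 V → ℕ) : Prop :=
  ∀ u v : V, ∃ p : G.Walk u v, p.IsPath ∧ ∃ k : ℕ, ∀ e ∈ p.edges, c e = k

/-- `mcNum G` is the maximum number of colors (counted on the edges of `G`)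
used in an MC-coloring of `G`; it is `0` if `G` admits no MC-coloring
(in particular if `G` is disconnected). -/
noncomputable def mcNum {V : Type*} (G : SimpleGraph V) : ℕ :=
  sSup {k | ∃ c : Sym2 V → ℕ, IsMCColoring G c ∧ (Set.image c G.edgeSet).ncard = k}

/-!
Fix an MC-coloring `c` with color set `K` and a proper vertex coloring `C`. For a color `k` let
`H_k` be the spanning subgraph of the edges of color `k`, with `m_k` edges, and split the vertices
into the classes of `x ↦ (C x, component of x in H_k)`. An edge of color `k` joins two vertices of
the same component with different `C`-colors, so there are more classes than components of `H_k`,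
of which there are at least `n - m_k`.
Two distinct vertices with the same `C`-color are joined by a monochromatic path, hence share a
class for some `k`; counting vertex by vertex this gives
`n - χ ≤ ∑ₖ (n - #classes_k) ≤ ∑ₖ (m_k - 1) = m - #K`.
-/

open Finset

theorem Finset.card_image_univ_eq_natCard_range {V β : Type*} [Fintype V] [DecidableEq β]
    (f : V → β) : #(univ.image f) = Nat.card (Set.range f) := by
  rw [← Set.ncard_coe_finset, coe_image, coe_univ, Set.image_univ, Nat.card_coe_set_eq]

theorem Finset.card_sub_card_image_le_sum {V α ι : Type*} {β : ι → Type*} [DecidableEq V]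
    [DecidableEq α] [∀ i, DecidableEq (β i)] (s : Finset V) (K : Finset ι) (f : V → α)
    (g : ∀ i, V → β i) (h : ∀ u ∈ s, ∀ v ∈ s, u ≠ v → f u = f v → ∃ i ∈ K, g i u = g i v) :
    (#s : ℤ) - #(s.image f) ≤ ∑ i ∈ K, ((#s : ℤ) - #(s.image (g i))) := by
  induction s using Finset.induction_on with
  | empty => simp
  | @insert a s ha ih =>
    have ih := ih fun u hu v hv ↦ h u (mem_insert_of_mem hu) v (mem_insert_of_mem hv)
    have hcard : (#(insert a s) : ℤ) = #s + 1 := by rw [card_insert_of_notMem ha]; push_cast; rfl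
    have hstep : ∀ i, (#((insert a s).image (g i)) : ℤ) ≤ #(s.image (g i)) + 1 := fun i ↦ by
      rw [image_insert]; exact_mod_cast card_insert_le _ _
    by_cases hnew : f a ∈ s.image f
    · -- `a` repeats the `f`-value of some `u ∈ s`, so its `g i`-value is not new either
      obtain ⟨u, hu, hfu⟩ := mem_image.mp hnew
      obtain ⟨i, hi, hgi⟩ := h u (mem_insert_of_mem hu) a (mem_insert_self a s)
        (fun hua ↦ ha (hua ▸ hu)) hfu
      have hf : (insert a s).image f = s.image f := by rw [image_insert, insert_eq_of_mem hnew]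
      have hg : (insert a s).image (g i) = s.image (g i) := by
        rw [image_insert, insert_eq_of_mem (hgi ▸ mem_image_of_mem _ hu)]
      have hlt : ∑ j ∈ K, ((#s : ℤ) - #(s.image (g j))) <
          ∑ j ∈ K, ((#(insert a s) : ℤ) - #((insert a s).image (g j))) :=
        sum_lt_sum (fun j _ ↦ by linarith [hstep j]) ⟨i, hi, by rw [hg, hcard]; linarith⟩
      rw [hf]
      linarith
    · have hf : (#((insert a s).image f) : ℤ) = #(s.image f) + 1 := by
        rw [image_insert, card_insert_of_notMem hnew]; push_cast; rfl
      have hle : ∑ j ∈ K, ((#s : ℤ) - #(s.image (g j))) ≤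
          ∑ j ∈ K, ((#(insert a s) : ℤ) - #((insert a s).image (g j))) :=
        sum_le_sum fun j _ ↦ by linarith [hstep j]
      linarith

namespace SimpleGraph

variable {V : Type*} {G : SimpleGraph V}

theorem Reachable.deleteEdges_reachable_or {u v x y : V} (h : G.Reachable x y) :
    (G.deleteEdges {s(u, v)}).Reachable x y ∨
      (((G.deleteEdges {s(u, v)}).Reachable x u ∨ (G.deleteEdges {s(u, v)}).Reachable x v) ∧
        ((G.deleteEdges {s(u, v)}).Reachable y u ∨ (G.deleteEdges {s(u, v)}).Reachable y v)) := by
  obtain ⟨w⟩ := h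
  induction w with
  | nil => exact Or.inl .rfl
  | @cons x z y hxz _ ih =>
    by_cases he : s(x, z) = s(u, v)
    · right
      rcases Sym2.eq_iff.mp he with ⟨rfl, rfl⟩ | ⟨rfl, rfl⟩
      · exact ⟨Or.inl .rfl, ih.elim (fun h ↦ Or.inr h.symm) And.right⟩
      · exact ⟨Or.inr .rfl, ih.elim (fun h ↦ Or.inl h.symm) And.right⟩
    · have hxz' : (G.deleteEdges {s(u, v)}).Reachable x z :=
        (deleteEdges_adj.mpr ⟨hxz, he⟩).reachable
      exact ih.imp hxz'.trans (And.imp_left (Or.imp hxz'.trans hxz'.trans))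

theorem card_connectedComponent_deleteEdges_le [Finite V] (u v : V) :
    Nat.card (G.deleteEdges {s(u, v)}).ConnectedComponent ≤ Nat.card G.ConnectedComponent + 1 := by
  set H := G.deleteEdges {s(u, v)}
  set φ : H.ConnectedComponent → G.ConnectedComponent :=
    ConnectedComponent.map (Hom.ofLE (deleteEdges_le _))
  set S : Set H.ConnectedComponent := {H.connectedComponentMk u}ᶜ
  -- two components of `H` other than that of `u` which merge in `G` both contain `v`
  have hinj : Set.InjOn φ S := by
    intro C hC D hD hCD
    induction C using ConnectedComponent.ind with | h x =>
    induction D using ConnectedComponent.ind with | h y =>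
    have hxu : ¬H.Reachable x u := fun h ↦ hC (ConnectedComponent.sound h)
    have hyu : ¬H.Reachable y u := fun h ↦ hD (ConnectedComponent.sound h)
    refine ConnectedComponent.sound ?_
    rcases (ConnectedComponent.exact hCD).deleteEdges_reachable_or (u := u) (v := v) with
      h | ⟨hx | hx, hy | hy⟩
    exacts [h, absurd hx hxu, absurd hx hxu, absurd hy hyu, hx.trans hy.symm]
  calc Nat.card H.ConnectedComponent = (S ∪ {H.connectedComponentMk u}).ncard := by
        rw [Set.compl_union_self, Set.ncard_univ]
    _ ≤ S.ncard + 1 := (Set.ncard_union_le _ _).trans_eq (by rw [Set.ncard_singleton])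
    _ = (φ '' S).ncard + 1 := by rw [hinj.ncard_image]
    _ ≤ Nat.card G.ConnectedComponent + 1 := by gcongr; exact Set.ncard_le_card _

theorem card_le_ncard_edgeSet_add_card_connectedComponent [Finite V] :
    Nat.card V ≤ G.edgeSet.ncard + Nat.card G.ConnectedComponent := by
  induction hm : G.edgeSet.ncard generalizing G with
  | zero =>
    have hbot : G = ⊥ := edgeSet_eq_empty.mp ((Set.ncard_eq_zero G.edgeSet.toFinite).mp hm)
    subst hbot
    rw [zero_add]
    exact Nat.card_le_card_of_injective (⊥ : SimpleGraph V).connectedComponentMk fun x y h ↦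
      reachable_bot.mp (ConnectedComponent.exact h)
  | succ m ih =>
    obtain ⟨e, he⟩ := Set.nonempty_of_ncard_ne_zero (s := G.edgeSet) (by omega)
    induction e using Sym2.ind with | h u v =>
    have hm' : (G.deleteEdges {s(u, v)}).edgeSet.ncard = m := by
      rw [edgeSet_deleteEdges, Set.ncard_sdiff_singleton_of_mem he, hm]; rfl
    have := ih hm'
    have := card_connectedComponent_deleteEdges_le (G := G) u v
    omega

theorem card_connectedComponent_lt_card_range [Finite V] {α : Type*} (f : V → α) {u v : V}
    (huv : G.Adj u v) (hf : f u ≠ f v) :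
    Nat.card G.ConnectedComponent <
      Nat.card (Set.range fun x ↦ (f x, G.connectedComponentMk x)) := by
  set g := fun x ↦ (f x, G.connectedComponentMk x)
  let ψ : Set.range g → G.ConnectedComponent := fun p ↦ p.1.2
  have hsurj : ψ.Surjective := ConnectedComponent.ind fun x ↦ ⟨⟨g x, x, rfl⟩, rfl⟩
  have hninj : ¬ψ.Injective := fun hψ ↦ hf <| congrArg (·.1.1)
    (@hψ ⟨g u, u, rfl⟩ ⟨g v, v, rfl⟩ (ConnectedComponent.sound huv.reachable))
  have := Fintype.ofFinite (Set.range g)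
  have := Fintype.ofFinite G.ConnectedComponent
  simpa only [Nat.card_eq_fintype_card] using
    Fintype.card_lt_of_surjective_not_injective ψ hsurj hninj

def colorClass (G : SimpleGraph V) (c : Sym2 V → ℕ) (k : ℕ) : SimpleGraph V :=
  G.deleteEdges {e | c e ≠ k}

theorem edgeSet_colorClass (c : Sym2 V → ℕ) (k : ℕ) :
    (G.colorClass c k).edgeSet = {e ∈ G.edgeSet | c e = k} := by
  ext e
  simp [colorClass]

theorem Connected.isMCColoring_const (hG : G.Connected) (k : ℕ) :
    IsMCColoring G fun _ ↦ k := by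
  classical
  intro u v
  let p := (hG u v).some.toPath
  exact ⟨p, p.2, k, fun _ _ ↦ rfl⟩

theorem Connected.exists_isMCColoring_ncard_image_eq_mcNum [Finite V] (hG : G.Connected) :
    ∃ c, IsMCColoring G c ∧ (c '' G.edgeSet).ncard = mcNum G :=
  Nat.sSup_mem (s := {k | ∃ c, IsMCColoring G c ∧ (c '' G.edgeSet).ncard = k})
    ⟨_, fun _ ↦ 0, hG.isMCColoring_const 0, rfl⟩
    ⟨G.edgeSet.ncard, by rintro _ ⟨c, -, rfl⟩; exact Set.ncard_image_le⟩

end SimpleGraph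

section MCColoring

variable {V : Type*} {G : SimpleGraph V} {c : Sym2 V → ℕ}

theorem IsMCColoring.exists_reachable_colorClass (hc : IsMCColoring G c) {u v : V}
    (huv : u ≠ v) : ∃ e ∈ G.edgeSet, (G.colorClass c (c e)).Reachable u v := by
  obtain ⟨p, -, k, hk⟩ := hc u v
  obtain ⟨e, he⟩ := List.exists_mem_of_ne_nil p.edges
    (by simpa [← List.length_eq_zero_iff] using (p.eq_of_length_eq_zero).mt huv)
  refine ⟨e, p.edges_subset_edgeSet he, ⟨p.transfer _ fun e' he' ↦ ?_⟩⟩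
  rw [edgeSet_colorClass, hk e he]
  exact ⟨p.edges_subset_edgeSet he', hk e' he'⟩

theorem IsMCColoring.ncard_image_add_card_le [Fintype V] (hc : IsMCColoring G c) {α : Type*}
    (C : G.Coloring α) :
    (c '' G.edgeSet).ncard + Fintype.card V ≤ G.edgeSet.ncard + Nat.card (Set.range C) := by
  classical
  set K := G.edgeFinset.image c
  set g := fun k x ↦ (C x, (G.colorClass c k).connectedComponentMk x)
  have hcolor_edges (k : ℕ) :
      (G.colorClass c k).edgeSet.ncard = #{e ∈ G.edgeFinset | c e = k} := by
    rw [← Set.ncard_coe_finset, edgeSet_colorClass]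
    simp
  have hcover : ∀ u ∈ univ, ∀ v ∈ univ, u ≠ v → C u = C v → ∃ k ∈ K, g k u = g k v := by
    intro u _ v _ huv hC
    obtain ⟨e, he, hr⟩ := hc.exists_reachable_colorClass huv
    exact ⟨c e, mem_image_of_mem c (mem_edgeFinset.mpr he),
      Prod.ext hC (ConnectedComponent.sound hr)⟩
  have hcolor : ∀ k ∈ K, (Fintype.card V : ℤ) - #(univ.image (g k)) ≤
      #{e ∈ G.edgeFinset | c e = k} - 1 := by
    intro k hk
    obtain ⟨e, he, rfl⟩ := mem_image.mp hk
    induction e using Sym2.ind with | h u v =>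
    have hadj : (G.colorClass c (c s(u, v))).Adj u v := by
      rw [← mem_edgeSet, edgeSet_colorClass]
      exact ⟨mem_edgeFinset.mp he, rfl⟩
    have h₁ := card_le_ncard_edgeSet_add_card_connectedComponent (G := G.colorClass c (c s(u, v)))
    have h₂ := card_connectedComponent_lt_card_range C hadj (C.valid (mem_edgeFinset.mp he))
    rw [hcolor_edges, Nat.card_eq_fintype_card] at h₁
    rw [← card_image_univ_eq_natCard_range] at h₂
    dsimp only [g]
    omega
  have hsum : #G.edgeFinset = ∑ k ∈ K, #{e ∈ G.edgeFinset | c e = k} :=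
    card_eq_sum_card_fiberwise fun e he ↦ mem_image_of_mem c he
  have hK : (c '' G.edgeSet).ncard = #K := by
    rw [← coe_edgeFinset, ← coe_image, Set.ncard_coe_finset]
  have hE : G.edgeSet.ncard = #G.edgeFinset := by rw [← coe_edgeFinset, Set.ncard_coe_finset]
  have key := (card_sub_card_image_le_sum univ K C g hcover).trans (sum_le_sum hcolor)
  rw [sum_sub_distrib, sum_const, ← Nat.cast_sum, ← hsum, card_univ, nsmul_eq_mul, mul_one] at key
  rw [hK, hE, ← card_image_univ_eq_natCard_range]
  omega

end MCColoring

theorem mc_le_chromaticNumber_general {V : Type*} [Fintype V]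
    (G : SimpleGraph V) [DecidableRel G.Adj] (hG : G.Connected) :
    (mcNum G : ℤ) ≤
      (G.edgeFinset.card : ℤ) - (Fintype.card V : ℤ) + (G.chromaticNumber.toNat : ℤ) := by
  obtain ⟨c, hc, hmc⟩ := hG.exists_isMCColoring_ncard_image_eq_mcNum
  obtain ⟨C⟩ := G.colorable_chromaticNumber_of_fintype
  have hbound := hc.ncard_image_add_card_le C
  have hrange : Nat.card (Set.range C) ≤ G.chromaticNumber.toNat :=
    (Finite.card_subtype_le _).trans_eq (Nat.card_eq_fintype_card.trans (Fintype.card_fin _))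
  have hE : G.edgeSet.ncard = #G.edgeFinset := by rw [← coe_edgeFinset, Set.ncard_coe_finset]
  omega

/-- For every connected graph `G` with `n` vertices and `m` edges,
`mc(G) ≤ m - n + χ(G)` where `χ(G)` is the chromatic number. -/
theorem mc_le_chromaticNumber {V : Type*} [Fintype V] [DecidableEq V]
    (G : SimpleGraph V) [DecidableRel G.Adj] (hG : G.Connected) :
    (mcNum G : ℤ) ≤
      (G.edgeFinset.card : ℤ) - (Fintype.card V : ℤ) + (G.chromaticNumber.toNat : ℤ) :=
  mc_le_chromaticNumber_general G hG
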